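/- Let ε ≥ 0 and m, r ∈ ℕ with r ≤ m. Let M be a mechanism assigning to each s ∈ {−1,+1}^m a probability measure M(s) on Ω, satisfying (ε,0)-DP: for all s, s′ differing in exactly one coordinate and every measurable A, M(s)(A) ≤ e^ε·M(s′)(A). Let S be uniform on {−1,+1}^m, ω ~ M(S), and let Ŝ : Ω → {−1,0,+1}^m be a measurable guessing rule that almost surely makes exactly r nonzero guesses. Then the expected number of correct guesses satisfies E[Σ_{i=1}^m max{0, Ŝ(ω)_i · S_i}] ≤ r·e^ε/(e^ε+1). -/

import Mathlib

/-!
Fix a coordinate `i`. Flipping the `i`-th bit of the membership vector is a bijection of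
`{−1,+1}^m` which turns a correct guess `Ŝᵢ = Sᵢ` into a wrong one, so by `ε`-DP the probability
`a` of a correct guess at `i` and the probability `b` of a wrong one satisfy `a ≤ e^ε b`, i.e.
`a ≤ e^ε/(e^ε+1) (a + b)`. Summing over `i`, `Σᵢ (a + b)` is the expected number of nonzero
guesses, which is `r`.
-/

open MeasureTheory Real
open scoped ENNReal

/-- The ±1 sign encoded by a Boolean membership bit (true = +1, false = −1). -/
def signOf (b : Bool) : ℤ := if b then 1 else -1

theorem le_div_add_one_mul_add {k a b : ℝ} (hk : 0 < k + 1) (hab : a ≤ k * b) :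
    a ≤ k / (k + 1) * (a + b) := by
  rw [div_mul_eq_mul_div, le_div_iff₀ hk]
  linarith

section Flip

variable {ι : Type*} [DecidableEq ι]

def flipAt (i : ι) (s : ι → Bool) : ι → Bool := Function.update s i (!s i)

theorem flipAt_involutive (i : ι) : Function.Involutive (flipAt i) := fun s => by
  simp [flipAt]

@[simp]
theorem flipAt_apply_self (i : ι) (s : ι → Bool) : flipAt i s i = !s i := by
  simp [flipAt]

theorem card_filter_ne_flipAt [Fintype ι] (i : ι) (s : ι → Bool) :
    (Finset.univ.filter fun j => s j ≠ flipAt i s j).card = 1 := by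
  rw [Finset.card_eq_one]
  refine ⟨i, Finset.ext fun j => ?_⟩
  by_cases hj : j = i <;> simp [flipAt, Function.update_apply, hj]

end Flip

theorem signOf_not (b : Bool) : signOf (!b) = -signOf b := by
  cases b <;> rfl

theorem neg_signOf_ne (b : Bool) : -signOf b ≠ signOf b := by
  cases b <;> decide

theorem max_zero_mul_signOf_eq_ite {g : ℤ} (hg : g = -1 ∨ g = 0 ∨ g = 1) (b : Bool) :
    max 0 (g * signOf b) = if g = signOf b then 1 else 0 := by
  rcases hg with rfl | rfl | rfl <;> cases b <;> decide

theorem ne_zero_iff_eq_signOf_or_eq_neg_signOf {g : ℤ} (hg : g = -1 ∨ g = 0 ∨ g = 1)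
    (b : Bool) : g ≠ 0 ↔ g = signOf b ∨ g = -signOf b := by
  rcases hg with rfl | rfl | rfl <;> cases b <;> decide

section Mixture

variable {ι Ω : Type*} [Fintype ι] [MeasurableSpace ι] [MeasurableSpace Ω]

theorem sum_smul_map_prodMk_apply (c : ℝ≥0∞) (M : ι → Measure Ω) {X : Set (ι × Ω)}
    (hX : MeasurableSet X) :
    (∑ s, c • (M s).map (fun ω => (s, ω))) X = ∑ s, c * M s (Prod.mk s ⁻¹' X) := by
  simp only [Measure.coe_finsetSum, Finset.sum_apply, Measure.smul_apply, smul_eq_mul,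
    Measure.map_apply measurable_prodMk_left hX]

theorem isProbabilityMeasure_sum_smul_map_prodMk [Nonempty ι] (M : ι → Measure Ω)
    [∀ s, IsProbabilityMeasure (M s)] :
    IsProbabilityMeasure (∑ s, (Fintype.card ι : ℝ≥0∞)⁻¹ • (M s).map (fun ω => (s, ω))) := by
  constructor
  rw [sum_smul_map_prodMk_apply _ _ MeasurableSet.univ]
  simp only [Set.preimage_univ, measure_univ, mul_one, Finset.sum_const, Finset.card_univ,
    nsmul_eq_mul]
  exact ENNReal.mul_inv_cancel (by simp) (by simp)

theorem sum_smul_map_prodMk_le_mul (c : ℝ≥0∞) (M : ι → Measure Ω) (σ : Equiv.Perm ι)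
    (K : ℝ≥0∞) (hM : ∀ s A, MeasurableSet A → M s A ≤ K * M (σ s) A)
    {X Y : Set (ι × Ω)} (hX : MeasurableSet X) (hY : MeasurableSet Y)
    (hXY : ∀ s, Prod.mk s ⁻¹' X = Prod.mk (σ s) ⁻¹' Y) :
    (∑ s, c • (M s).map (fun ω => (s, ω))) X ≤ K * (∑ s, c • (M s).map (fun ω => (s, ω))) Y := by
  rw [sum_smul_map_prodMk_apply c M hX, sum_smul_map_prodMk_apply c M hY]
  calc ∑ s, c * M s (Prod.mk s ⁻¹' X)
      ≤ ∑ s, K * (c * M (σ s) (Prod.mk (σ s) ⁻¹' Y)) := Finset.sum_le_sum fun s _ => by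
        rw [mul_left_comm, ← hXY]
        gcongr
        exact hM s _ (measurable_prodMk_left hX)
    _ = K * ∑ s, c * M s (Prod.mk s ⁻¹' Y) := by
        rw [Finset.mul_sum, Equiv.sum_comp σ fun s => K * (c * M s (Prod.mk s ⁻¹' Y))]

end Mixture

theorem integral_card_filter {α ι : Type*} [Fintype ι] [MeasurableSpace α] (μ : Measure α)
    [IsFiniteMeasure μ] (p : ι → α → Prop) [∀ i, DecidablePred (p i)]
    (hp : ∀ i, MeasurableSet {a | p i a}) :
    ∫ a, ((Finset.univ.filter fun i => p i a).card : ℝ) ∂μ = ∑ i, μ.real {a | p i a} := by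
  have hind : ∀ a, ((Finset.univ.filter fun i => p i a).card : ℝ)
      = ∑ i, {a | p i a}.indicator 1 a := fun a => by
    simp only [Finset.natCast_card_filter, Set.indicator_apply, Set.mem_ofPred_eq, Pi.one_apply]
  simp_rw [hind]
  rw [integral_finsetSum _ fun i _ => (integrable_const 1).indicator (hp i)]
  exact Finset.sum_congr rfl fun i _ => integral_indicator_one (hp i)

section Guesses

variable {ι Ω : Type*} (Sg : Ω → ι → ℤ)

def correctGuess (i : ι) : Set ((ι → Bool) × Ω) := {q | Sg q.2 i = signOf (q.1 i)}

def wrongGuess (i : ι) : Set ((ι → Bool) × Ω) := {q | Sg q.2 i = -signOf (q.1 i)}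

variable {Sg}

theorem disjoint_correctGuess_wrongGuess (i : ι) :
    Disjoint (correctGuess Sg i) (wrongGuess Sg i) :=
  Set.disjoint_left.mpr fun q hC hD => neg_signOf_ne (q.1 i) (hD.symm.trans hC)

theorem setOf_ne_zero_eq_correctGuess_union_wrongGuess
    (hvals : ∀ ω i, Sg ω i = -1 ∨ Sg ω i = 0 ∨ Sg ω i = 1) (i : ι) :
    {q : (ι → Bool) × Ω | Sg q.2 i ≠ 0} = correctGuess Sg i ∪ wrongGuess Sg i :=
  Set.ext fun q => ne_zero_iff_eq_signOf_or_eq_neg_signOf (hvals q.2 i) (q.1 i)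

theorem preimage_prodMk_correctGuess [DecidableEq ι] (i : ι) (s : ι → Bool) :
    Prod.mk s ⁻¹' correctGuess Sg i = Prod.mk (flipAt i s) ⁻¹' wrongGuess Sg i := by
  ext ω
  simp [correctGuess, wrongGuess, signOf_not]

variable [MeasurableSpace Ω]

theorem measurableSet_correctGuess (hSg : Measurable Sg) (i : ι) :
    MeasurableSet (correctGuess Sg i) :=
  measurableSet_eq_fun ((measurable_pi_apply i).comp (hSg.comp measurable_snd))
    ((Measurable.of_discrete (f := signOf)).comp ((measurable_pi_apply i).comp measurable_fst))

theorem measurableSet_wrongGuess (hSg : Measurable Sg) (i : ι) :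
    MeasurableSet (wrongGuess Sg i) :=
  measurableSet_eq_fun ((measurable_pi_apply i).comp (hSg.comp measurable_snd))
    ((Measurable.of_discrete (f := fun b => -signOf b)).comp
      ((measurable_pi_apply i).comp measurable_fst))

variable [Fintype ι] (μ : Measure ((ι → Bool) × Ω))

theorem integral_sum_max_zero_mul_signOf [IsFiniteMeasure μ] (hSg : Measurable Sg)
    (hvals : ∀ ω i, Sg ω i = -1 ∨ Sg ω i = 0 ∨ Sg ω i = 1) :
    ∫ q, ((∑ i, max 0 (Sg q.2 i * signOf (q.1 i)) : ℤ) : ℝ) ∂μ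
      = ∑ i, μ.real (correctGuess Sg i) := by
  refine Eq.trans ?_ (integral_card_filter μ (fun i q => Sg q.2 i = signOf (q.1 i))
    (measurableSet_correctGuess hSg))
  congr with q
  rw [Finset.sum_congr rfl fun i _ => max_zero_mul_signOf_eq_ite (hvals q.2 i) (q.1 i),
    Finset.sum_boole, Int.cast_natCast]

theorem sum_measureReal_correctGuess_add_wrongGuess [IsProbabilityMeasure μ] {r : ℕ}
    (hSg : Measurable Sg) (hvals : ∀ ω i, Sg ω i = -1 ∨ Sg ω i = 0 ∨ Sg ω i = 1)
    (hguesses : ∀ᵐ q ∂μ, (Finset.univ.filter (fun i => Sg q.2 i ≠ 0)).card = r) :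
    ∑ i, (μ.real (correctGuess Sg i) + μ.real (wrongGuess Sg i)) = r := by
  have hunion := setOf_ne_zero_eq_correctGuess_union_wrongGuess hvals
  calc ∑ i, (μ.real (correctGuess Sg i) + μ.real (wrongGuess Sg i))
      = ∫ q, ((Finset.univ.filter fun i => Sg q.2 i ≠ 0).card : ℝ) ∂μ := by
        rw [integral_card_filter μ (fun i q => Sg q.2 i ≠ 0) fun i =>
          hunion i ▸ (measurableSet_correctGuess hSg i).union (measurableSet_wrongGuess hSg i)]
        refine Finset.sum_congr rfl fun i _ => ?_
        rw [hunion, measureReal_union (disjoint_correctGuess_wrongGuess i)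
          (measurableSet_wrongGuess hSg i)]
    _ = r := by
        rw [integral_congr_ae (hguesses.mono fun q hq => congrArg Nat.cast hq)]
        simp

end Guesses

theorem o1_audit_expected_correct_general
    {Ω : Type*} [MeasurableSpace Ω]
    (ε : ℝ) (m r : ℕ)
    (M : (Fin m → Bool) → Measure Ω)
    (hMprob : ∀ s, IsProbabilityMeasure (M s))
    (hDP : ∀ s s' : Fin m → Bool,
      (Finset.univ.filter (fun i => s i ≠ s' i)).card = 1 →
      ∀ A : Set Ω, MeasurableSet A →
        M s A ≤ ENNReal.ofReal (Real.exp ε) * M s' A)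
    (P : Measure ((Fin m → Bool) × Ω))
    (hP : P = ∑ s : Fin m → Bool,
      ((2 : ℝ≥0∞) ^ m)⁻¹ • (M s).map (fun ω => (s, ω)))
    (Sg : Ω → Fin m → ℤ) (hSg : Measurable Sg)
    (hvals : ∀ ω i, Sg ω i = -1 ∨ Sg ω i = 0 ∨ Sg ω i = 1)
    (hguesses : ∀ᵐ q ∂P, (Finset.univ.filter (fun i => Sg q.2 i ≠ 0)).card = r) :
    ∫ q, ((∑ i, max 0 (Sg q.2 i * signOf (q.1 i)) : ℤ) : ℝ) ∂P ≤
      (r : ℝ) * (Real.exp ε / (Real.exp ε + 1)) := by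
  have hcard : (2 : ℝ≥0∞) ^ m = Fintype.card (Fin m → Bool) := by simp
  have : IsProbabilityMeasure P := hP ▸ hcard ▸ isProbabilityMeasure_sum_smul_map_prodMk M
  have hflip i : P.real (correctGuess Sg i) ≤ Real.exp ε * P.real (wrongGuess Sg i) := by
    have h := sum_smul_map_prodMk_le_mul ((2 : ℝ≥0∞) ^ m)⁻¹ M (flipAt_involutive i).toPerm _
      (fun s => hDP s _ (card_filter_ne_flipAt i s)) (measurableSet_correctGuess hSg i)
      (measurableSet_wrongGuess hSg i) (preimage_prodMk_correctGuess i)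
    rw [← hP] at h
    rw [measureReal_def, measureReal_def, ← ENNReal.toReal_ofReal (exp_pos ε).le,
      ← ENNReal.toReal_mul]
    exact ENNReal.toReal_mono (by finiteness) h
  calc ∫ q, ((∑ i, max 0 (Sg q.2 i * signOf (q.1 i)) : ℤ) : ℝ) ∂P
      = ∑ i, P.real (correctGuess Sg i) := integral_sum_max_zero_mul_signOf P hSg hvals
    _ ≤ ∑ i, Real.exp ε / (Real.exp ε + 1) *
          (P.real (correctGuess Sg i) + P.real (wrongGuess Sg i)) :=
        Finset.sum_le_sum fun i _ => le_div_add_one_mul_add (by positivity) (hflip i)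
    _ = r * (Real.exp ε / (Real.exp ε + 1)) := by
        rw [← Finset.mul_sum, sum_measureReal_correctGuess_add_wrongGuess P hSg hvals hguesses,
          mul_comm]

/-- expectation form of the O(1) auditing guarantee: for an (ε,0)-DP
mechanism M on membership vectors S ∈ {−1,+1}^m with i.i.d. fair-sign coordinates and a
measurable guessing rule with values in {−1,0,+1}^m making exactly r nonzero guesses
a.s., the expected number of correct guesses satisfies
E[Σᵢ max{0, Ŝᵢ·Sᵢ}] ≤ r·e^ε/(e^ε+1). -/
theorem o1_audit_expected_correct
    {Ω : Type*} [MeasurableSpace Ω]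
    (ε : ℝ) (hε : 0 ≤ ε) (m r : ℕ) (hrm : r ≤ m)
    (M : (Fin m → Bool) → Measure Ω)
    (hMprob : ∀ s, IsProbabilityMeasure (M s))
    (hDP : ∀ s s' : Fin m → Bool,
      (Finset.univ.filter (fun i => s i ≠ s' i)).card = 1 →
      ∀ A : Set Ω, MeasurableSet A →
        M s A ≤ ENNReal.ofReal (Real.exp ε) * M s' A)
    (P : Measure ((Fin m → Bool) × Ω))
    (hP : P = ∑ s : Fin m → Bool,
      ((2 : ℝ≥0∞) ^ m)⁻¹ • (M s).map (fun ω => (s, ω)))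
    (Sg : Ω → Fin m → ℤ) (hSg : Measurable Sg)
    (hvals : ∀ ω i, Sg ω i = -1 ∨ Sg ω i = 0 ∨ Sg ω i = 1)
    (hguesses : ∀ᵐ q ∂P, (Finset.univ.filter (fun i => Sg q.2 i ≠ 0)).card = r) :
    ∫ q, ((∑ i, max 0 (Sg q.2 i * signOf (q.1 i)) : ℤ) : ℝ) ∂P ≤
      (r : ℝ) * (Real.exp ε / (Real.exp ε + 1)) :=
  o1_audit_expected_correct_general ε m r M hMprob hDP P hP Sg hSg hvals hguesses
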